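/- arXiv:2012.07451 — 2 statements merged into one kernel-verified Lean document; each statement's English description precedes it below -/
import Mathlib

section
/- For fixed nonnegative constants A, B, C, ν, μ and p > 0, σ > 0, the function r(d_i, d_a) = log₂(1 + (A·d_i^{−ν} + B·d_i^{−ν/2}·d_a^{−μ/2} + C·d_a^{−μ})·p/σ²) is a convex function of (d_i, d_a) on (0, ∞) × (0, ∞). -/
/-!
Each of `1`, `A dᵢ^{-ν}`, `B dᵢ^{-ν/2} dₐ^{-μ/2}` and `C dₐ^{-μ}` is log-convex on the open
quadrant: a nonpositive power of a positive variable is log-convex by weighted AM–GM, and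
products of log-convex functions are log-convex. By Hölder's inequality sums of log-convex
functions are again log-convex, and the logarithm of a positive log-convex function is convex.
-/

open Real Set

theorem Real.rpow_mul_rpow_add_rpow_mul_rpow_le {a b u v u' v' : ℝ} (ha : 0 ≤ a) (hb : 0 ≤ b)
    (hab : a + b = 1) (hu : 0 ≤ u) (hv : 0 ≤ v) (hu' : 0 ≤ u') (hv' : 0 ≤ v') :
    u ^ a * v ^ b + u' ^ a * v' ^ b ≤ (u + u') ^ a * (v + v') ^ b := by
  rcases ha.eq_or_lt with rfl | ha
  · simp [show b = 1 by linarith]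
  rcases hb.eq_or_lt with rfl | hb
  · simp [show a = 1 by linarith]
  have := inner_le_Lp_mul_Lq_of_nonneg Finset.univ (HolderConjugate.inv_inv ha hb hab)
    (f := ![u ^ a, u' ^ a]) (g := ![v ^ b, v' ^ b])
    (by simp [Fin.forall_fin_two, rpow_nonneg, *]) (by simp [Fin.forall_fin_two, rpow_nonneg, *])
  simpa [Fin.sum_univ_two, ← rpow_mul, hu, hv, hu', hv', ha.ne', hb.ne'] using this

variable {E F : Type*} [AddCommGroup E] [Module ℝ E] [AddCommGroup F] [Module ℝ F]

/-- Log-convexity in multiplicative form, `f (a • x + b • y) ≤ f x ^ a * f y ^ b`, which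
makes sense for nonnegative functions that may vanish. -/
def LogConvexOn (s : Set E) (f : E → ℝ) : Prop :=
  Convex ℝ s ∧ (∀ x ∈ s, 0 ≤ f x) ∧
    ∀ ⦃x⦄, x ∈ s → ∀ ⦃y⦄, y ∈ s → ∀ ⦃a b : ℝ⦄, 0 ≤ a → 0 ≤ b → a + b = 1 →
      f (a • x + b • y) ≤ f x ^ a * f y ^ b

namespace LogConvexOn

variable {s t : Set E} {f g : E → ℝ}

theorem subset (hf : LogConvexOn t f) (hst : s ⊆ t) (hs : Convex ℝ s) : LogConvexOn s f :=
  ⟨hs, fun x hx => hf.2.1 x (hst hx), fun _ hx _ hy _ _ ha hb hab =>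
    hf.2.2 (hst hx) (hst hy) ha hb hab⟩

theorem comp_linearMap {s : Set F} {f : F → ℝ} (hf : LogConvexOn s f) (L : E →ₗ[ℝ] F) :
    LogConvexOn (L ⁻¹' s) (f ∘ L) :=
  ⟨hf.1.linear_preimage L, fun x hx => hf.2.1 _ hx, fun x hx y hy a b ha hb hab => by
    simpa only [Function.comp, map_add, map_smul] using hf.2.2 hx hy ha hb hab⟩

theorem add (hf : LogConvexOn s f) (hg : LogConvexOn s g) : LogConvexOn s (f + g) := by
  refine ⟨hf.1, fun x hx => add_nonneg (hf.2.1 x hx) (hg.2.1 x hx),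
    fun x hx y hy a b ha hb hab => ?_⟩
  calc f (a • x + b • y) + g (a • x + b • y)
      ≤ f x ^ a * f y ^ b + g x ^ a * g y ^ b :=
        add_le_add (hf.2.2 hx hy ha hb hab) (hg.2.2 hx hy ha hb hab)
    _ ≤ (f x + g x) ^ a * (f y + g y) ^ b :=
        rpow_mul_rpow_add_rpow_mul_rpow_le ha hb hab (hf.2.1 x hx) (hf.2.1 y hy)
          (hg.2.1 x hx) (hg.2.1 y hy)

theorem mul (hf : LogConvexOn s f) (hg : LogConvexOn s g) : LogConvexOn s (f * g) := by
  refine ⟨hf.1, fun x hx => mul_nonneg (hf.2.1 x hx) (hg.2.1 x hx),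
    fun x hx y hy a b ha hb hab => ?_⟩
  have hf₀ := hf.2.1; have hg₀ := hg.2.1
  calc f (a • x + b • y) * g (a • x + b • y)
      ≤ (f x ^ a * f y ^ b) * (g x ^ a * g y ^ b) :=
        mul_le_mul (hf.2.2 hx hy ha hb hab) (hg.2.2 hx hy ha hb hab)
          (hg₀ _ (hf.1 hx hy ha hb hab)) (by have := hf₀ x hx; have := hf₀ y hy; positivity)
    _ = (f x * g x) ^ a * (f y * g y) ^ b := by
        rw [mul_rpow (hf₀ x hx) (hg₀ x hx), mul_rpow (hf₀ y hy) (hg₀ y hy)]; ring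

theorem convexOn_logb {β : ℝ} (hβ : 1 < β) (hf : LogConvexOn s f) (hpos : ∀ x ∈ s, 0 < f x) :
    ConvexOn ℝ s (fun x => logb β (f x)) := by
  refine ⟨hf.1, fun x hx y hy a b ha hb hab => ?_⟩
  calc logb β (f (a • x + b • y))
      ≤ logb β (f x ^ a * f y ^ b) :=
        logb_le_logb_of_le hβ (hpos _ (hf.1 hx hy ha hb hab)) (hf.2.2 hx hy ha hb hab)
    _ = a • logb β (f x) + b • logb β (f y) := by
        rw [logb_mul (rpow_pos_of_pos (hpos x hx) a).ne' (rpow_pos_of_pos (hpos y hy) b).ne',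
          logb_rpow_eq_mul_logb_of_pos (hpos x hx), logb_rpow_eq_mul_logb_of_pos (hpos y hy)]
        rfl

end LogConvexOn

theorem logConvexOn_const {s : Set E} (hs : Convex ℝ s) {c : ℝ} (hc : 0 ≤ c) :
    LogConvexOn s (fun _ => c) :=
  ⟨hs, fun _ _ => hc, fun _ _ _ _ a b _ _ hab => by
    rw [← rpow_add' hc (by rw [hab]; exact one_ne_zero), hab, rpow_one]⟩

theorem logConvexOn_rpow_of_nonpos {e : ℝ} (he : e ≤ 0) :
    LogConvexOn (Ioi 0) (fun x : ℝ => x ^ e) := by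
  refine ⟨convex_Ioi 0, fun x hx => (rpow_pos_of_pos hx e).le,
    fun x (hx : 0 < x) y (hy : 0 < y) a b ha hb hab => ?_⟩
  calc (a • x + b • y) ^ e ≤ (x ^ a * y ^ b) ^ e :=
        rpow_le_rpow_of_nonpos (by positivity)
          (geom_mean_le_arith_mean2_weighted ha hb hx.le hy.le hab) he
    _ = (x ^ e) ^ a * (y ^ e) ^ b := by
        rw [mul_rpow (by positivity) (by positivity), ← rpow_mul hx.le, ← rpow_mul hy.le,
          ← rpow_mul hx.le, ← rpow_mul hy.le, mul_comm a, mul_comm b]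

theorem stmt_1_general (A B C ν μ p σ : ℝ) (hA : 0 ≤ A) (hB : 0 ≤ B) (hC : 0 ≤ C)
    (hν : 0 ≤ ν) (hμ : 0 ≤ μ) (hp : 0 < p) :
    ConvexOn ℝ ((Set.Ioi (0 : ℝ)) ×ˢ (Set.Ioi (0 : ℝ)))
      (fun d : ℝ × ℝ =>
        Real.logb 2 (1 + (A * d.1 ^ (-ν) + B * d.1 ^ (-ν / 2) * d.2 ^ (-μ / 2)
          + C * d.2 ^ (-μ)) * (p / σ ^ 2))) := by
  set Q := Ioi (0 : ℝ) ×ˢ Ioi (0 : ℝ)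
  have hQ : Convex ℝ Q := (convex_Ioi 0).prod (convex_Ioi 0)
  have hk : 0 ≤ p / σ ^ 2 := by positivity
  have hconst {c : ℝ} (hc : 0 ≤ c) : LogConvexOn Q (fun _ => c) := logConvexOn_const hQ hc
  have hfst (e : ℝ) (he : e ≤ 0) : LogConvexOn Q (fun d => d.1 ^ e) :=
    ((logConvexOn_rpow_of_nonpos he).comp_linearMap (LinearMap.fst ℝ ℝ ℝ)).subset
      (fun _ hd => hd.1) hQ
  have hsnd (e : ℝ) (he : e ≤ 0) : LogConvexOn Q (fun d => d.2 ^ e) :=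
    ((logConvexOn_rpow_of_nonpos he).comp_linearMap (LinearMap.snd ℝ ℝ ℝ)).subset
      (fun _ hd => hd.2) hQ
  have hrate : LogConvexOn Q (fun d : ℝ × ℝ => 1 + (A * d.1 ^ (-ν)
      + B * d.1 ^ (-ν / 2) * d.2 ^ (-μ / 2) + C * d.2 ^ (-μ)) * (p / σ ^ 2)) := by
    have h₀ := hconst zero_le_one
    have h₁ := (hconst (mul_nonneg hA hk)).mul (hfst (-ν) (by linarith))
    have h₂ := ((hconst (mul_nonneg hB hk)).mul (hfst (-ν / 2) (by linarith))).mul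
      (hsnd (-μ / 2) (by linarith))
    have h₃ := (hconst (mul_nonneg hC hk)).mul (hsnd (-μ) (by linarith))
    convert ((h₀.add h₁).add h₂).add h₃ using 1
    funext d
    simp only [Pi.add_apply, Pi.mul_apply]
    ring
  refine hrate.convexOn_logb one_lt_two fun d hd => ?_
  obtain ⟨hd₁, hd₂⟩ : 0 < d.1 ∧ 0 < d.2 := hd
  positivity

/-- For nonnegative constants `A, B, C, ν, μ` and `p, σ > 0`, the rate
`r(dᵢ, dₐ) = log₂(1 + (A dᵢ^{−ν} + B dᵢ^{−ν/2} dₐ^{−μ/2} + C dₐ^{−μ}) p/σ²)`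
is convex on `(0,∞) × (0,∞)`. -/
theorem stmt_1 (A B C ν μ p σ : ℝ) (hA : 0 ≤ A) (hB : 0 ≤ B) (hC : 0 ≤ C)
    (hν : 0 ≤ ν) (hμ : 0 ≤ μ) (hp : 0 < p) (hσ : 0 < σ) :
    ConvexOn ℝ ((Set.Ioi (0 : ℝ)) ×ˢ (Set.Ioi (0 : ℝ)))
      (fun d : ℝ × ℝ =>
        Real.logb 2 (1 + (A * d.1 ^ (-ν) + B * d.1 ^ (-ν / 2) * d.2 ^ (-μ / 2)
          + C * d.2 ^ (-μ)) * (p / σ ^ 2))) :=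
  stmt_1_general A B C ν μ p σ hA hB hC hν hμ hp
end

section
/- Let F = ln(2)·(1 + S·p/σ²) where S = A·d_i^{−ν} + B·d_i^{−ν/2}d_a^{−μ/2} + C·d_a^{−μ} with A, B, C ≥ 0, ν, μ > 0, d_i, d_a > 0, and p, σ > 0. Then the second partial derivative of r(d_i,d_a) = log₂(1 + S·p/σ²) with respect to d_i, namely ∂²r/∂d_i² = [ (ν(ν+1)A d_i^{−ν−2} + (ν/2)(ν/2+1)B d_i^{−ν/2−2}d_a^{−μ/2})·F·(p/σ²) − ln(2)·(ν A d_i^{−ν−1} + (ν/2)B d_i^{−ν/2−1}d_a^{−μ/2})²·(p/σ²)² ] / F², is nonnegative. -/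
private lemma key_aux (ν a b c : ℝ) (hν : 0 < ν) (ha : 0 ≤ a) (hb : 0 ≤ b) (hc : 0 ≤ c) :
    (ν * a + (ν / 2) * b) ^ 2 ≤ (ν * (ν + 1) * a + (ν / 2) * (ν / 2 + 1) * b) * (a + b + c) := by
  nlinarith [mul_nonneg hν.le (mul_nonneg ha ha), mul_nonneg hν.le (mul_nonneg ha hb),
    mul_nonneg (mul_nonneg hν.le hν.le) (mul_nonneg ha hb),
    mul_nonneg hν.le (mul_nonneg hb hb), mul_nonneg hν.le (mul_nonneg ha hc),
    mul_nonneg (mul_nonneg hν.le hν.le) (mul_nonneg ha hc),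
    mul_nonneg hν.le (mul_nonneg hb hc),
    mul_nonneg (mul_nonneg hν.le hν.le) (mul_nonneg hb hc)]

/-- The diagonal Hessian entry `∂²r/∂dᵢ²` of the rate `r = log₂(1 + S·p/σ²)` with
`S = A dᵢ^{−ν} + B dᵢ^{−ν/2} dₐ^{−μ/2} + C dₐ^{−μ}` is nonnegative. -/
theorem stmt_10 (A B C ν μ di da p σ : ℝ) (hA : 0 ≤ A) (hB : 0 ≤ B) (hC : 0 ≤ C)
    (hν : 0 < ν) (hμ : 0 < μ) (hdi : 0 < di) (hda : 0 < da) (hp : 0 < p) (hσ : 0 < σ) :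
    0 ≤ ((ν * (ν + 1) * A * di ^ (-ν - 2)
            + (ν / 2) * (ν / 2 + 1) * B * di ^ (-ν / 2 - 2) * da ^ (-μ / 2))
          * (Real.log 2 * (1 + (A * di ^ (-ν) + B * di ^ (-ν / 2) * da ^ (-μ / 2)
              + C * da ^ (-μ)) * (p / σ ^ 2)))
          * (p / σ ^ 2)
        - Real.log 2 * (ν * A * di ^ (-ν - 1)
            + (ν / 2) * B * di ^ (-ν / 2 - 1) * da ^ (-μ / 2)) ^ 2 * (p / σ ^ 2) ^ 2)
        / (Real.log 2 * (1 + (A * di ^ (-ν) + B * di ^ (-ν / 2) * da ^ (-μ / 2)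
            + C * da ^ (-μ)) * (p / σ ^ 2))) ^ 2 := by
  have hL : 0 < Real.log 2 := Real.log_pos (by norm_num)
  have hq : 0 < p / σ ^ 2 := by positivity
  have hu : 0 < di ^ (-ν) := Real.rpow_pos_of_pos hdi _
  have hv : 0 < di ^ (-ν / 2) := Real.rpow_pos_of_pos hdi _
  have hw : 0 < da ^ (-μ / 2) := Real.rpow_pos_of_pos hda _
  have hz : 0 < da ^ (-μ) := Real.rpow_pos_of_pos hda _
  have he : 0 < di ^ (-1 : ℝ) := Real.rpow_pos_of_pos hdi _
  have e1 : di ^ (-ν - 2) = di ^ (-ν) * di ^ (-1 : ℝ) * di ^ (-1 : ℝ) := by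
    rw [show (-ν - 2 : ℝ) = -ν + -1 + -1 by ring, Real.rpow_add hdi, Real.rpow_add hdi]
  have e2 : di ^ (-ν - 1) = di ^ (-ν) * di ^ (-1 : ℝ) := by
    rw [show (-ν - 1 : ℝ) = -ν + -1 by ring, Real.rpow_add hdi]
  have e3 : di ^ (-ν / 2 - 2) = di ^ (-ν / 2) * di ^ (-1 : ℝ) * di ^ (-1 : ℝ) := by
    rw [show (-ν / 2 - 2 : ℝ) = -ν / 2 + -1 + -1 by ring, Real.rpow_add hdi, Real.rpow_add hdi]
  have e4 : di ^ (-ν / 2 - 1) = di ^ (-ν / 2) * di ^ (-1 : ℝ) := by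
    rw [show (-ν / 2 - 1 : ℝ) = -ν / 2 + -1 by ring, Real.rpow_add hdi]
  rw [e1, e2, e3, e4]
  set q := p / σ ^ 2 with hqdef
  set u := di ^ (-ν) with hudef
  set v := di ^ (-ν / 2) with hvdef
  set w := da ^ (-μ / 2) with hwdef
  set z := da ^ (-μ) with hzdef
  set e := di ^ (-1 : ℝ) with hedef
  set L := Real.log 2 with hLdef
  apply div_nonneg _ (sq_nonneg _)
  set a := A * u with hadef
  set b := B * (v * w) with hbdef
  set c := C * z with hcdef
  have ha : 0 ≤ a := by positivity
  have hb : 0 ≤ b := by positivity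
  have hc : 0 ≤ c := by positivity
  set D := ν * (ν + 1) * a + (ν / 2) * (ν / 2 + 1) * b with hDdef
  set G := ν * a + (ν / 2) * b with hGdef
  have hD : 0 ≤ D := by positivity
  have key : G ^ 2 ≤ D * (a + b + c) := key_aux ν a b c hν ha hb hc
  have hmain : 0 ≤ L * q * (e * e) * (D + (D * (a + b + c) - G ^ 2) * q) := by
    have h1 : 0 ≤ D * (a + b + c) - G ^ 2 := by linarith
    positivity
  calc (0:ℝ) ≤ L * q * (e * e) * (D + (D * (a + b + c) - G ^ 2) * q) := hmain
    _ = (ν * (ν + 1) * A * (u * e * e) + ν / 2 * (ν / 2 + 1) * B * (v * e * e) * w) *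
          (L * (1 + (A * u + B * v * w + C * z) * q)) * q -
        L * (ν * A * (u * e) + ν / 2 * B * (v * e) * w) ^ 2 * q ^ 2 := by
      simp only [hDdef, hGdef, hadef, hbdef, hcdef]; ring
end
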